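/- arXiv:2403.18190 — 2 statements merged into one kernel-verified Lean document; each statement's English description precedes it below -/
import Mathlib

section
/- The following rewriting process terminates: given a finite sequence of positive roots (t_1,…,t_k) of a finite root system, repeatedly replace a consecutive pair (t_i, t_{i+1}) that is 'out of order' (with respect to a fixed linear order on the positive roots) either by merging equal entries or by the pair (t_{i+1}, t_i) followed by insertion of finitely many roots of the form i·t_i + j·t_{i+1} (i,j ≥ 1) that are positive roots (which have strictly larger height than both t_i and t_{i+1}). This process reaches a sorted sequence in finitely many steps. -/
/-- A rewriting step on sequences of positive roots (the roots are indexed by `Fin N`, ordered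
by the fixed linear order of `Fin N`): a consecutive out-of-order pair is either merged (if the
two entries are equal) or swapped, with insertion of the finite list `ins t t'` of roots
`i·t + j·t'` (`i, j ≥ 1`) that are positive roots. -/
inductive RootRwStep (N : ℕ) (ins : Fin N → Fin N → List (Fin N)) :
    List (Fin N) → List (Fin N) → Prop
  | merge (a b : List (Fin N)) (t : Fin N) :
      RootRwStep N ins (a ++ t :: t :: b) (a ++ t :: b)
  | swap (a b : List (Fin N)) (t t' : Fin N) (h : t' < t) :
      RootRwStep N ins (a ++ t :: t' :: b) (a ++ t' :: t :: (ins t t' ++ b))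

/-!
Give each root `s` the weight `K - ht s`, where `K` bounds all heights, and attach to a sequence
the multiset of the weights of its entries together with, for each inversion, the smaller
weight of its two entries. A merge only deletes elements of this multiset. A swap of an
inversion `(t, t')` deletes the weight of that inversion and inserts roots of larger height,
hence of smaller weight; every new inversion involves an inserted root, so its weight is
smaller still. Both moves therefore decrease the multiset in the Dershowitz–Manna order, which
is well-founded. A sequence admitting no step has no adjacent pair that is equal or out of
order, so it is strictly increasing.
-/

section Inversions

variable {α : Type*} [LinearOrder α]

/-- The inversions `(x, y)`, `y < x`, between a block `s` and a block `t` standing after it. -/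
def crossInversions (s t : Multiset α) : Multiset (α × α) :=
  (s ×ˢ t).filter fun p => p.2 < p.1

def List.inversions : List α → Multiset (α × α)
  | [] => 0
  | x :: xs => crossInversions {x} xs + xs.inversions

lemma mem_crossInversions {s t : Multiset α} {p : α × α} :
    p ∈ crossInversions s t ↔ p.1 ∈ s ∧ p.2 ∈ t ∧ p.2 < p.1 := by
  simp [crossInversions, and_assoc]

lemma crossInversions_add_left (s₁ s₂ t : Multiset α) :
    crossInversions (s₁ + s₂) t = crossInversions s₁ t + crossInversions s₂ t := by
  simp only [crossInversions, Multiset.add_product, Multiset.filter_add]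

lemma crossInversions_add_right (s t₁ t₂ : Multiset α) :
    crossInversions s (t₁ + t₂) = crossInversions s t₁ + crossInversions s t₂ := by
  simp only [crossInversions, Multiset.product_add, Multiset.filter_add]

namespace List

lemma mem_of_mem_inversions {l : List α} {p : α × α} (hp : p ∈ l.inversions) :
    p.1 ∈ l ∧ p.2 ∈ l := by
  induction l with
  | nil => simp [inversions] at hp
  | cons x xs ih =>
    rcases Multiset.mem_add.1 hp with hp | hp
    · obtain ⟨h₁, h₂, -⟩ := mem_crossInversions.1 hp
      exact ⟨by simp_all, by simp_all⟩
    · exact ⟨mem_cons_of_mem _ (ih hp).1, mem_cons_of_mem _ (ih hp).2⟩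

lemma inversions_append (u v : List α) :
    (u ++ v).inversions = u.inversions + v.inversions + crossInversions u v := by
  induction u with
  | nil => simp [inversions, crossInversions]
  | cons x u ih =>
    rw [cons_append, inversions, inversions, ih, ← Multiset.coe_add, crossInversions_add_right,
      ← Multiset.cons_coe, ← Multiset.singleton_add, crossInversions_add_left]
    abel

lemma inversions_pair_of_lt {t t' : α} (h : t' < t) : [t, t'].inversions = {(t, t')} := by
  simp [inversions, crossInversions, Multiset.filter_singleton, h]

lemma inversions_pair_of_le {t t' : α} (h : t' ≤ t) : [t', t].inversions = 0 := by
  simp [inversions, crossInversions, Multiset.filter_singleton, h]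

lemma inversions_insert (u c v : List α) :
    (u ++ c ++ v).inversions =
      (u ++ v).inversions + (crossInversions u c + c.inversions + crossInversions c v) := by
  simp only [inversions_append, ← Multiset.coe_add, crossInversions_add_left]
  abel

lemma inversions_swap {t t' : α} (h : t' < t) (a b : List α) :
    (a ++ t :: t' :: b).inversions = (t, t') ::ₘ (a ++ t' :: t :: b).inversions := by
  have hperm : ([t, t'] : Multiset α) = [t', t] := Multiset.coe_eq_coe.2 (.swap _ _ _)
  rw [show a ++ t :: t' :: b = a ++ [t, t'] ++ b by simp,
    show a ++ t' :: t :: b = a ++ [t', t] ++ b by simp, inversions_insert, inversions_insert,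
    inversions_pair_of_lt h, inversions_pair_of_le h.le, hperm, ← Multiset.singleton_add]
  abel

end List

end Inversions

section WeightProfile

variable {α : Type*} [LinearOrder α] (w : α → ℕ)

def weightProfile (l : List α) : Multiset ℕ :=
  (l : Multiset α).map w + l.inversions.map fun p => min (w p.1) (w p.2)

lemma weightProfile_swap {t t' : α} (h : t' < t) (a b : List α) :
    weightProfile w (a ++ t :: t' :: b) =
      min (w t) (w t') ::ₘ weightProfile w (a ++ t' :: t :: b) := by
  have hperm : ((a ++ t :: t' :: b : List α) : Multiset α) = (a ++ t' :: t :: b : List α) :=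
    Multiset.coe_eq_coe.2 ((List.Perm.swap _ _ _).append_left a)
  rw [weightProfile, weightProfile, hperm, List.inversions_swap h, Multiset.map_cons,
    Multiset.add_cons]

lemma weightProfile_insert (u c v : List α) :
    ∃ E, weightProfile w (u ++ c ++ v) = weightProfile w (u ++ v) + E ∧
      (c : Multiset α).map w ≤ E ∧ ∀ e ∈ E, ∃ s ∈ c, e ≤ w s := by
  set D := crossInversions u c + c.inversions + crossInversions c v
  have hD : ∀ p ∈ D, p.1 ∈ c ∨ p.2 ∈ c := by
    intro p hp
    simp only [D, Multiset.mem_add, mem_crossInversions] at hp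
    rcases hp with (hp | hp) | hp
    · exact .inr hp.2.1
    · exact .inl (List.mem_of_mem_inversions hp).1
    · exact .inl hp.1
  refine ⟨(c : Multiset α).map w + D.map fun p => min (w p.1) (w p.2), ?_,
    Multiset.le_add_right _ _, ?_⟩
  · rw [weightProfile, weightProfile, List.inversions_insert]
    simp only [D, ← Multiset.coe_add, Multiset.map_add]
    abel
  · intro e he
    rcases Multiset.mem_add.1 he with he | he
    · obtain ⟨s, hs, rfl⟩ := Multiset.mem_map.1 he
      exact ⟨s, hs, le_rfl⟩
    · obtain ⟨p, hp, rfl⟩ := Multiset.mem_map.1 he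
      rcases hD p hp with h | h
      · exact ⟨_, h, min_le_left _ _⟩
      · exact ⟨_, h, min_le_right _ _⟩

lemma weightProfile_merge_lt (a b : List α) (t : α) :
    (weightProfile w (a ++ t :: b)).IsDershowitzMannaLT (weightProfile w (a ++ t :: t :: b)) := by
  obtain ⟨E, hE, hcE, -⟩ := weightProfile_insert w (a ++ [t]) [t] b
  have hE0 : E ≠ ∅ := fun h0 => by simp [Multiset.empty_eq_zero, h0] at hcE
  exact ⟨weightProfile w (a ++ t :: b), 0, E, hE0, (add_zero _).symm, by simpa using hE, by simp⟩

lemma weightProfile_swap_lt {t t' : α} (h : t' < t) (a b c : List α)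
    (hc : ∀ s ∈ c, w s < min (w t) (w t')) :
    (weightProfile w (a ++ t' :: t :: (c ++ b))).IsDershowitzMannaLT
      (weightProfile w (a ++ t :: t' :: b)) := by
  obtain ⟨E, hE, -, hEc⟩ := weightProfile_insert w (a ++ [t', t]) c b
  refine ⟨weightProfile w (a ++ t' :: t :: b), E, {min (w t) (w t')}, by simp,
    by simpa using hE, ?_, fun e he => ?_⟩
  · rw [weightProfile_swap w h, add_comm, Multiset.singleton_add]
  · obtain ⟨s, hs, hes⟩ := hEc e he
    exact ⟨_, Multiset.mem_singleton_self _, hes.trans_lt (hc s hs)⟩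

end WeightProfile

namespace RootRwStep

variable {N : ℕ} {ins : Fin N → Fin N → List (Fin N)}

lemma cons (x : Fin N) {l l' : List (Fin N)} (h : RootRwStep N ins l l') :
    RootRwStep N ins (x :: l) (x :: l') := by
  cases h with
  | merge a b t => exact merge (x :: a) b t
  | swap a b t t' h => exact swap (x :: a) b t t' h

lemma weightProfile_lt (w : Fin N → ℕ) (hw : ∀ t t', ∀ s ∈ ins t t', w s < w t ∧ w s < w t')
    {l l' : List (Fin N)} (h : RootRwStep N ins l l') :
    (weightProfile w l').IsDershowitzMannaLT (weightProfile w l) := by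
  cases h with
  | merge a b t => exact weightProfile_merge_lt w a b t
  | swap a b t t' h =>
    exact weightProfile_swap_lt w h a b _ fun s hs => lt_min_iff.2 (hw t t' s hs)

theorem wellFounded_flip (w : Fin N → ℕ)
    (hw : ∀ t t', ∀ s ∈ ins t t', w s < w t ∧ w s < w t') :
    WellFounded (fun l' l : List (Fin N) => RootRwStep N ins l l') :=
  Subrelation.wf (weightProfile_lt w hw)
    (InvImage.wf (weightProfile w) Multiset.wellFounded_isDershowitzMannaLT)

theorem isChain_lt_of_forall_not {l : List (Fin N)} (hl : ∀ l', ¬ RootRwStep N ins l l') :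
    l.IsChain (· < ·) := by
  induction l with
  | nil => exact List.isChain_nil
  | cons x xs ih =>
    cases xs with
    | nil => exact List.isChain_singleton x
    | cons y ys =>
      refine List.isChain_cons_cons.2 ⟨?_, ih fun l' h => hl _ (h.cons x)⟩
      rcases lt_trichotomy x y with hxy | rfl | hyx
      · exact hxy
      · exact absurd (merge [] ys x) (hl _)
      · exact absurd (swap [] ys x y hyx) (hl _)

end RootRwStep

theorem rootRwStep_terminates_general (N : ℕ) (ht : Fin N → ℕ)
    (ins : Fin N → Fin N → List (Fin N))
    (hins : ∀ t t', ∀ s ∈ ins t t', ht t < ht s ∧ ht t' < ht s) :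
    WellFounded (fun y x : List (Fin N) => RootRwStep N ins x y) ∧
    (∀ l : List (Fin N), (∀ y, ¬ RootRwStep N ins l y) → List.Chain' (· < ·) l) := by
  set K := Finset.univ.sup ht
  have hK : ∀ t, ht t ≤ K := fun t => Finset.le_sup (Finset.mem_univ t)
  refine ⟨RootRwStep.wellFounded_flip (fun t => K - ht t) fun t t' s hs => ?_,
    fun l hl => RootRwStep.isChain_lt_of_forall_not hl⟩
  obtain ⟨hts, ht's⟩ := hins t t' s hs
  have hsK := hK s
  omega

/-- Termination of the reordering process: if every root has positive height and every root
inserted by a swap step has height strictly larger than the heights of both swapped roots, then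
the rewriting process terminates (the step relation is well-founded), and any sequence to which
no step applies is sorted. -/
theorem rootRwStep_terminates (N : ℕ) (ht : Fin N → ℕ) (hht : ∀ t, 0 < ht t)
    (ins : Fin N → Fin N → List (Fin N))
    (hins : ∀ t t', ∀ s ∈ ins t t', ht t < ht s ∧ ht t' < ht s) :
    WellFounded (fun y x : List (Fin N) => RootRwStep N ins x y) ∧
    (∀ l : List (Fin N), (∀ y, ¬ RootRwStep N ins l y) → List.Chain' (· < ·) l) :=
  rootRwStep_terminates_general N ht ins hins
end

section
/- Let G be a group with a BN-pair with Weyl group W and simple reflections S. For s ∈ S and w ∈ W: if ℓ(sw) > ℓ(w), then (BsB)(BwB) = B(sw)B; otherwise (BsB)(BwB) ⊆ BwB ∪ B(sw)B. -/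
open scoped Pointwise

/-- Let `G` be a group with a BN-pair, with Weyl group `W` (a Coxeter group) and Bruhat
decomposition `G = ⊔_{w ∈ W} κ w` into `B`-double cosets `κ w = B ẇ B`.  For a simple
reflection `s` and `w ∈ W`: if `ℓ(sw) > ℓ(w)` then `(BsB)(BwB) = B(sw)B`; otherwise
`(BsB)(BwB) ⊆ BwB ∪ B(sw)B`. -/
theorem bnPair_double_coset_mul {G W B' : Type*} [Group G] [Group W]
    {M : CoxeterMatrix B'} (cs : CoxeterSystem M W)
    (B : Subgroup G) (κ : W → Set G)
    (hcoset : ∀ w : W, ∃ g : G, κ w = {x | ∃ b ∈ B, ∃ b' ∈ B, x = b * g * b'})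
    (hone : κ 1 = (B : Set G))
    (hcover : ∀ g : G, ∃ w : W, g ∈ κ w)
    (hdisj : ∀ w w' : W, w ≠ w' → Disjoint (κ w) (κ w'))
    (hinv : ∀ w : W, (κ w)⁻¹ = κ w⁻¹)
    (haxiom : ∀ (i : B') (w : W),
      κ (cs.simple i) * κ w ⊆ κ (cs.simple i * w) ∪ κ w)
    (hs : ∀ i : B', κ (cs.simple i) ≠ (B : Set G))
    (i : B') (w : W) :
    (cs.length w < cs.length (cs.simple i * w) →
      κ (cs.simple i) * κ w = κ (cs.simple i * w)) ∧
    (¬ cs.length w < cs.length (cs.simple i * w) →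
      κ (cs.simple i) * κ w ⊆ κ w ∪ κ (cs.simple i * w)) := by
  classical
  -- every `κ w` is nonempty
  have hne : ∀ v : W, (κ v).Nonempty := by
    intro v
    obtain ⟨g, hg⟩ := hcoset v
    exact ⟨g, by rw [hg]; exact ⟨1, one_mem _, 1, one_mem _, by group⟩⟩
  -- `κ v` is the double coset of any of its elements
  have hmem : ∀ (v : W) (x : G), x ∈ κ v →
      κ v = {y | ∃ b ∈ B, ∃ b' ∈ B, y = b * x * b'} := by
    intro v x hx
    obtain ⟨g, hg⟩ := hcoset v
    rw [hg] at hx ⊢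
    obtain ⟨b₀, hb₀, b₀', hb₀', hxg⟩ := hx
    ext y
    constructor
    · rintro ⟨b, hb, b', hb', rfl⟩
      refine ⟨b * b₀⁻¹, mul_mem hb (inv_mem hb₀), b₀'⁻¹ * b', mul_mem (inv_mem hb₀') hb', ?_⟩
      rw [hxg]; group
    · rintro ⟨b, hb, b', hb', rfl⟩
      refine ⟨b * b₀, mul_mem hb hb₀, b₀' * b', mul_mem hb₀' hb', ?_⟩
      rw [hxg]; group
  -- absorption
  have habsL : ∀ v : W, (B : Set G) * κ v = κ v := by
    intro v
    obtain ⟨g, hg⟩ := hcoset v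
    rw [hg]
    ext y
    rw [Set.mem_mul]
    constructor
    · rintro ⟨c, hc, z, ⟨b, hb, b', hb', rfl⟩, rfl⟩
      exact ⟨c * b, mul_mem hc hb, b', hb', by group⟩
    · rintro ⟨b, hb, b', hb', rfl⟩
      exact ⟨1, one_mem _, b * g * b', ⟨b, hb, b', hb', rfl⟩, by group⟩
  have habsR : ∀ v : W, κ v * (B : Set G) = κ v := by
    intro v
    obtain ⟨g, hg⟩ := hcoset v
    rw [hg]
    ext y
    rw [Set.mem_mul]
    constructor
    · rintro ⟨z, ⟨b, hb, b', hb', rfl⟩, c, hc, rfl⟩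
      exact ⟨b, hb, b' * c, mul_mem hb' hc, by group⟩
    · rintro ⟨b, hb, b', hb', rfl⟩
      exact ⟨b * g * b', ⟨b, hb, b', hb', rfl⟩, 1, one_mem _, by group⟩
  -- the right-handed multiplication axiom, by taking inverses
  have haxiomR : ∀ (j : B') (v : W),
      κ v * κ (cs.simple j) ⊆ κ (v * cs.simple j) ∪ κ v := by
    intro j v
    have h1 : (κ v * κ (cs.simple j))⁻¹ = κ (cs.simple j) * κ v⁻¹ := by
      rw [mul_inv_rev, hinv, hinv, cs.inv_simple]
    have h2 : κ (cs.simple j) * κ v⁻¹ ⊆ κ (cs.simple j * v⁻¹) ∪ κ v⁻¹ := haxiom j v⁻¹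
    intro x hx
    have hx' : x⁻¹ ∈ κ (cs.simple j * v⁻¹) ∪ κ v⁻¹ := by
      refine h2 ?_
      rw [← h1]
      exact Set.inv_mem_inv.mpr hx
    rcases hx' with h | h
    · left
      have : x⁻¹⁻¹ ∈ (κ (cs.simple j * v⁻¹))⁻¹ := Set.inv_mem_inv.mpr h
      rwa [inv_inv, hinv, mul_inv_rev, inv_inv, cs.inv_simple] at this
    · right
      have : x⁻¹⁻¹ ∈ (κ v⁻¹)⁻¹ := Set.inv_mem_inv.mpr h
      rwa [inv_inv, hinv, inv_inv] at this
  -- the key statement, by strong induction on the length of `v`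
  have key : ∀ n : ℕ, ∀ (j : B') (v : W), cs.length v = n →
      cs.length v < cs.length (cs.simple j * v) →
      κ (cs.simple j) * κ v = κ (cs.simple j * v) := by
    intro n
    induction n using Nat.strong_induction_on with
    | _ n ih =>
      intro j v hn hlt
      rcases eq_or_ne v 1 with rfl | hv1
      · rw [mul_one, hone, habsR]
      · -- pick a right descent of `v`
        obtain ⟨t, ht⟩ := cs.exists_rightDescent_of_ne_one hv1
        set v' := v * cs.simple t with hv'
        have hvv' : v' * cs.simple t = v := by
          rw [hv', cs.simple_mul_simple_cancel_right]
        have hlen' : cs.length v' + 1 = cs.length v := cs.isRightDescent_iff.mp ht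
        have hlenlt : cs.length v' < n := by omega
        -- length of `s j * v`
        have hsv : cs.length (cs.simple j * v) = cs.length v + 1 :=
          (cs.length_simple_mul v j).resolve_right (by omega)
        -- length of `s j * v'`
        have hsv' : cs.length v' < cs.length (cs.simple j * v') := by
          have h1 : cs.length (cs.simple j * v) ≤
              cs.length (cs.simple j * v') + cs.length (cs.simple t) := by
            conv_lhs => rw [← hvv', ← mul_assoc]
            exact cs.length_mul_le _ _
          have h2 : cs.length (cs.simple t) = 1 := cs.length_simple t
          omega
        -- inductive hypothesis, on the left
        have hIH : κ (cs.simple j) * κ v' = κ (cs.simple j * v') :=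
          ih _ hlenlt j v' rfl hsv'
        -- inductive hypothesis, on the right (via inverses)
        have hIHinv : κ (cs.simple t) * κ v'⁻¹ = κ (cs.simple t * v'⁻¹) := by
          refine ih _ (by rwa [cs.length_inv]) t v'⁻¹ rfl ?_
          have : cs.simple t * v'⁻¹ = v⁻¹ := by
            rw [hv', mul_inv_rev, cs.inv_simple, cs.simple_mul_simple_cancel_left]
          rw [this, cs.length_inv, cs.length_inv]
          omega
        have hR : κ v' * κ (cs.simple t) = κ v := by
          have := congrArg (fun X : Set G => X⁻¹) hIHinv
          simp only [mul_inv_rev] at this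
          rw [hinv, hinv, hinv, inv_inv, cs.inv_simple, mul_inv_rev, inv_inv,
            cs.inv_simple, hvv'] at this
          exact this
        -- the product lies in κ(s j * v) ∪ κ(s j * v')
        have hsub1 : κ (cs.simple j) * κ v ⊆ κ (cs.simple j * v) ∪ κ (cs.simple j * v') := by
          calc κ (cs.simple j) * κ v = κ (cs.simple j) * (κ v' * κ (cs.simple t)) := by rw [hR]
          _ = κ (cs.simple j) * κ v' * κ (cs.simple t) := by rw [mul_assoc]
          _ = κ (cs.simple j * v') * κ (cs.simple t) := by rw [hIH]
          _ ⊆ κ (cs.simple j * v' * cs.simple t) ∪ κ (cs.simple j * v') := haxiomR t _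
          _ = κ (cs.simple j * v) ∪ κ (cs.simple j * v') := by rw [mul_assoc, hvv']
        have hsub2 : κ (cs.simple j) * κ v ⊆ κ (cs.simple j * v) ∪ κ v := haxiom j v
        -- `s j * v ≠ v` and `s j * v' ≠ v`
        have hne1 : cs.simple j * v ≠ v := by
          intro h
          have := cs.length_simple_mul_ne v j
          rw [h] at this
          exact this rfl
        have hne2 : cs.simple j * v' ≠ v := by
          intro h
          have hjv : cs.simple j * v = v' := by
            conv_lhs => rw [← hvv', ← mul_assoc, h]
          rw [hjv] at hsv
          omega
        -- forward inclusion
        have hfwd : κ (cs.simple j) * κ v ⊆ κ (cs.simple j * v) := by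
          intro x hx
          rcases hsub2 hx with h | h
          · exact h
          · rcases hsub1 hx with h' | h'
            · exact absurd h (Set.disjoint_left.mp (hdisj _ _ hne1) h')
            · exact absurd h (Set.disjoint_left.mp (hdisj _ _ hne2) h')
        -- reverse inclusion
        refine le_antisymm hfwd ?_
        obtain ⟨a, ha⟩ := hne (cs.simple j)
        obtain ⟨b, hb⟩ := hne v
        have hab : a * b ∈ κ (cs.simple j * v) :=
          hfwd (Set.mul_mem_mul ha hb)
        intro y hy
        rw [hmem _ _ hab] at hy
        obtain ⟨c, hc, c', hc', rfl⟩ := hy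
        have h1 : c * a ∈ κ (cs.simple j) := by
          rw [← habsL (cs.simple j)]
          exact Set.mul_mem_mul hc ha
        have h2 : b * c' ∈ κ v := by
          rw [← habsR v]
          exact Set.mul_mem_mul hb hc'
        have : (c * a) * (b * c') ∈ κ (cs.simple j) * κ v := Set.mul_mem_mul h1 h2
        have heq : c * (a * b) * c' = (c * a) * (b * c') := by group
        rwa [heq]
  constructor
  · intro hlt
    exact key (cs.length w) i w rfl hlt
  · intro _
    intro x hx
    rcases haxiom i w hx with h | h
    · exact Or.inr h
    · exact Or.inl h
end
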